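/- arXiv:2512.08640 — 4 statements merged into one kernel-verified Lean document; each statement's English description precedes it below -/
import Mathlib

section
/- Time reversal preserves validity: define the time reversal σ⁻¹ of σ : ℤ → Set V by (σ⁻¹)^k := σ^{−k}, and for each ITL formula A (with connectives ◯, Prev, chop) define its syntactic reversal A⁻¹ by swapping ◯ with Prev, reversing the operands of chop, and replacing each propositional variable p by Fin p := □(Empty → p). Then for all σ, i ≤ j: σ,i,j ⊨ A⁻¹ iff σ⁻¹,−j,−i ⊨ A. Consequently A is valid iff A⁻¹ is valid. -/
/-- ITL formulas with connectives `◯`, `Prev` and chop. -/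
inductive PITL (V : Type) : Type
  | bot : PITL V
  | var : V → PITL V
  | imp : PITL V → PITL V → PITL V
  | next : PITL V → PITL V
  | prev : PITL V → PITL V
  | chop : PITL V → PITL V → PITL V

namespace PITL

variable {V : Type}

def Sat (σ : ℤ → Set V) : ℤ → ℤ → PITL V → Prop
  | _, _, bot => False
  | i, _, var p => p ∈ σ i
  | i, j, imp A B => Sat σ i j A → Sat σ i j B
  | i, j, next A => i < j ∧ Sat σ (i + 1) j A
  | i, j, prev A => i < j ∧ Sat σ i (j - 1) A
  | i, j, chop A B => ∃ k, i ≤ k ∧ k ≤ j ∧ Sat σ i k A ∧ Sat σ k j B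

def top : PITL V := imp bot bot
def neg (A : PITL V) : PITL V := imp A bot
def empty : PITL V := neg (next top)
/-- `◇A := ⊤;A`. -/
def dia (A : PITL V) : PITL V := chop top A
/-- `□A := ¬◇¬A`. -/
def box (A : PITL V) : PITL V := neg (dia (neg A))
/-- `Fin p := □(Empty → p)`: `p` at the last state. -/
def fin (A : PITL V) : PITL V := box (imp empty A)

/-- Syntactic time reversal: swap `◯` and `Prev`, reverse chop operands,
replace variables `p` by `Fin p`. -/
def rev : PITL V → PITL V
  | bot => bot
  | var p => fin (var p)
  | imp A B => imp (rev A) (rev B)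
  | next A => prev (rev A)
  | prev A => next (rev A)
  | chop A B => chop (rev B) (rev A)

def Valid (A : PITL V) : Prop := ∀ (σ : ℤ → Set V) (i j : ℤ), i ≤ j → Sat σ i j A

end PITL

open PITL

lemma sat_fin_var {V : Type} (σ : ℤ → Set V) (p : V) (i j : ℤ) (h : i ≤ j) :
    Sat σ i j (fin (var p)) ↔ p ∈ σ j := by
  simp only [fin, box, dia, neg, top, empty, Sat]
  constructor
  · intro H
    by_contra hp
    exact H ⟨j, h, le_refl j, id, fun H2 => hp (H2 (fun h2 => (lt_irrefl j h2.1).elim))⟩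
  · rintro hp ⟨k, hik, hkj, -, H⟩
    apply H
    intro he
    rcases lt_or_eq_of_le hkj with hlt | rfl
    · exact absurd ⟨hlt, id⟩ he
    · exact hp

lemma rev_key {V : Type} (A : PITL V) :
    ∀ (σ : ℤ → Set V) (i j : ℤ), i ≤ j →
      (Sat σ i j (rev A) ↔ Sat (fun k => σ (-k)) (-j) (-i) A) := by
  induction A with
  | bot => intro σ i j h; simp [rev, Sat]
  | var p =>
      intro σ i j h
      rw [rev, sat_fin_var σ p i j h]
      simp [Sat]
  | imp A B ihA ihB =>
      intro σ i j h
      simp only [rev, Sat]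
      rw [ihA σ i j h, ihB σ i j h]
  | next A ih =>
      intro σ i j h
      simp only [rev, Sat]
      rw [show (-j + 1 : ℤ) = -(j - 1) by ring]
      constructor
      · rintro ⟨hij, hs⟩
        exact ⟨by omega, (ih σ i (j - 1) (by omega)).mp hs⟩
      · rintro ⟨hij, hs⟩
        exact ⟨by omega, (ih σ i (j - 1) (by omega)).mpr hs⟩
  | prev A ih =>
      intro σ i j h
      simp only [rev, Sat]
      rw [show (-i - 1 : ℤ) = -(i + 1) by ring]
      constructor
      · rintro ⟨hij, hs⟩
        exact ⟨by omega, (ih σ (i + 1) j (by omega)).mp hs⟩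
      · rintro ⟨hij, hs⟩
        exact ⟨by omega, (ih σ (i + 1) j (by omega)).mpr hs⟩
  | chop A B ihA ihB =>
      intro σ i j h
      simp only [rev, Sat]
      constructor
      · rintro ⟨k, hik, hkj, hB, hA⟩
        exact ⟨-k, by omega, by omega, (ihA σ k j hkj).mp hA, (ihB σ i k hik).mp hB⟩
      · rintro ⟨k, hjk, hki, hA, hB⟩
        refine ⟨-k, by omega, by omega, ?_, ?_⟩
        · exact (ihB σ i (-k) (by omega)).mpr (by rw [neg_neg]; exact hB)
        · exact (ihA σ (-k) j (by omega)).mpr (by rw [neg_neg]; exact hA)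

/-- time reversal preserves validity: with `(σ⁻¹)^k := σ^{−k}`,
`σ,i,j ⊨ A⁻¹` iff `σ⁻¹,−j,−i ⊨ A`; consequently `A` is valid iff `A⁻¹` is valid. -/
theorem time_reversal {V : Type} (A : PITL V) :
    (∀ (σ : ℤ → Set V) (i j : ℤ), i ≤ j →
      (Sat σ i j (rev A) ↔ Sat (fun k => σ (-k)) (-j) (-i) A)) ∧
    (Valid A ↔ Valid (rev A)) := by
  refine ⟨rev_key A, ?_, ?_⟩
  · intro hV σ i j hij
    exact (rev_key A σ i j hij).mpr (hV _ _ _ (by omega))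
  · intro hV σ i j hij
    have := (rev_key A (fun k => σ (-k)) (-j) (-i) (by omega)).mp
      (hV _ _ _ (by omega))
    simpa using this
end

section
/- Define ◇_a := ◇_r◇_r◇_l◇_l and □_a := ¬◇_a¬. Then ◇_a is the universal-access diamond: for all σ : ℤ → Set V and i ≤ j, σ,i,j ⊨ ◇_a A if and only if there exist i' ≤ j' in ℤ with σ,i',j' ⊨ A. Hence σ,i,j ⊨ □_a A iff σ,i',j' ⊨ A for all i' ≤ j'. -/
/-- Formulas of ITLNL: ITL extended with the neighbourhood modalities `◇_l`, `◇_r`. -/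
inductive ITLNL (V : Type) : Type
  | bot : ITLNL V
  | var : V → ITLNL V
  | imp : ITLNL V → ITLNL V → ITLNL V
  | next : ITLNL V → ITLNL V
  | chop : ITLNL V → ITLNL V → ITLNL V
  | star : ITLNL V → ITLNL V
  | diaL : ITLNL V → ITLNL V
  | diaR : ITLNL V → ITLNL V

namespace ITLNL

variable {V : Type}

/-- Satisfaction `σ,i,j ⊨ A` for `σ : ℤ → Set V` and reference intervals `[i,j]`, `i ≤ j`. -/
def Sat (σ : ℤ → Set V) : ℤ → ℤ → ITLNL V → Prop
  | _, _, bot => False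
  | i, _, var p => p ∈ σ i
  | i, j, imp A B => Sat σ i j A → Sat σ i j B
  | i, j, next A => i < j ∧ Sat σ (i + 1) j A
  | i, j, chop A B => ∃ k, i ≤ k ∧ k ≤ j ∧ Sat σ i k A ∧ Sat σ k j B
  | i, j, star A => i = j ∨ ∃ (N : ℕ) (f : ℕ → ℤ), f 0 = i ∧ f N = j ∧
      (∀ n < N, f n < f (n + 1)) ∧ ∀ n < N, Sat σ (f n) (f (n + 1)) A
  | i, _, diaL A => ∃ k, k ≤ i ∧ Sat σ k i A
  | _, j, diaR A => ∃ k, j ≤ k ∧ Sat σ j k A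

def top : ITLNL V := imp bot bot
def neg (A : ITLNL V) : ITLNL V := imp A bot
def or' (A B : ITLNL V) : ITLNL V := imp (neg A) B
def and' (A B : ITLNL V) : ITLNL V := neg (imp A (neg B))
def iff' (A B : ITLNL V) : ITLNL V := and' (imp A B) (imp B A)
def empty : ITLNL V := neg (next top)
def skip : ITLNL V := next empty
def boxL (A : ITLNL V) : ITLNL V := neg (diaL (neg A))
def boxR (A : ITLNL V) : ITLNL V := neg (diaR (neg A))
/-- The universal-access diamond `◇_a := ◇_r◇_r◇_l◇_l`. -/
def diaA (A : ITLNL V) : ITLNL V := diaR (diaR (diaL (diaL A)))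
/-- The universal modality `□_a := ¬◇_a¬`. -/
def boxA (A : ITLNL V) : ITLNL V := neg (diaA (neg A))

def bigOr : List (ITLNL V) → ITLNL V
  | [] => bot
  | A :: l => or' A (bigOr l)

def bigAnd : List (ITLNL V) → ITLNL V
  | [] => top
  | A :: l => and' A (bigAnd l)

def Valid (A : ITLNL V) : Prop := ∀ (σ : ℤ → Set V) (i j : ℤ), i ≤ j → Sat σ i j A

/-- The set of propositional variables occurring in a formula. -/
def vars : ITLNL V → Set V
  | bot => ∅
  | var p => {p}
  | imp A B => vars A ∪ vars B
  | next A => vars A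
  | chop A B => vars A ∪ vars B
  | star A => vars A
  | diaL A => vars A
  | diaR A => vars A

/-- Semantics of existential propositional quantification `∃p A`. -/
def SatEx (p : V) (A : ITLNL V) (σ : ℤ → Set V) (i j : ℤ) : Prop :=
  ∃ σ' : ℤ → Set V, (∀ k : ℤ, σ k \ {p} = σ' k \ {p}) ∧ Sat σ' i j A

end ITLNL

open ITLNL

/-- `◇_a := ◇_r◇_r◇_l◇_l` is the universal-access diamond, and
`□_a := ¬◇_a¬` is the universal modality. -/
theorem universal_access {V : Type} (A : ITLNL V) (σ : ℤ → Set V) (i j : ℤ) (hij : i ≤ j) :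
    (Sat σ i j (diaA A) ↔ ∃ i' j' : ℤ, i' ≤ j' ∧ Sat σ i' j' A) ∧
    (Sat σ i j (boxA A) ↔ ∀ i' j' : ℤ, i' ≤ j' → Sat σ i' j' A) := by
  constructor
  · constructor
    · rintro ⟨k, hk, m, hm, l, hl, i', hi', hA⟩
      exact ⟨i', l, hi', hA⟩
    · rintro ⟨i', j', hij', hA⟩
      refine ⟨max j j', le_max_left _ _, max j j', le_rfl, j', le_max_right _ _, i', hij', hA⟩
  · simp only [boxA, neg, Sat]
    constructor
    · intro h i' j' hij'
      by_contra hA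
      exact h ⟨max j j', le_max_left _ _, max j j', le_rfl, j', le_max_right _ _, i', hij', fun x => hA x⟩
    · rintro h ⟨k, hk, m, hm, l, hl, i', hi', hA⟩
      exact hA (h i' l hi')
end

section
/- □w annihilates inverse projection relative to w: for any state formula w and ITL formula B, the equivalence w Π⁻¹ (B ∧ □w) ≡ B ∧ □w is valid on finite intervals, where □w states that every suffix (equivalently, every state) of the interval satisfies w. -/
/-- Formulas of propositional discrete-time Interval Temporal Logic (ITL):
`⊥ | p | A → A | ◯A | A;A | A*`. -/
inductive ITL (V : Type) : Type
  | bot : ITL V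
  | var : V → ITL V
  | imp : ITL V → ITL V → ITL V
  | next : ITL V → ITL V
  | chop : ITL V → ITL V → ITL V
  | star : ITL V → ITL V

namespace ITL

variable {V : Type}

/-- Satisfaction `σ,i,j ⊨ A` for models `σ : ℤ → Set V` and reference intervals `[i,j]`. -/
def Sat (σ : ℤ → Set V) : ℤ → ℤ → ITL V → Prop
  | _, _, bot => False
  | i, _, var p => p ∈ σ i
  | i, j, imp A B => Sat σ i j A → Sat σ i j B
  | i, j, next A => i < j ∧ Sat σ (i + 1) j A
  | i, j, chop A B => ∃ k, i ≤ k ∧ k ≤ j ∧ Sat σ i k A ∧ Sat σ k j B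
  | i, j, star A => i = j ∨ ∃ (N : ℕ) (f : ℕ → ℤ), f 0 = i ∧ f N = j ∧
      (∀ n < N, f n < f (n + 1)) ∧ ∀ n < N, Sat σ (f n) (f (n + 1)) A

def top : ITL V := imp bot bot
def neg (A : ITL V) : ITL V := imp A bot
def or' (A B : ITL V) : ITL V := imp (neg A) B
def and' (A B : ITL V) : ITL V := neg (imp A (neg B))
def iff' (A B : ITL V) : ITL V := and' (imp A B) (imp B A)
/-- `Empty`: a single state interval. -/
def empty : ITL V := neg (next top)
/-- `Skip`: a 2-state interval. -/
def skip : ITL V := next empty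
/-- `◇A := ⊤;A`: `A` in some suffix subinterval. -/
def dia (A : ITL V) : ITL V := chop top A
/-- `□A`: `A` in all suffix subintervals. -/
def box (A : ITL V) : ITL V := neg (dia (neg A))
/-- `Di A := A;⊤`: `A` in some prefix subinterval. -/
def di (A : ITL V) : ITL V := chop A top
/-- `Bi A`: `A` in all prefix subintervals. -/
def bi (A : ITL V) : ITL V := neg (di (neg A))

def bigOr : List (ITL V) → ITL V
  | [] => bot
  | A :: l => or' A (bigOr l)

def bigAnd : List (ITL V) → ITL V
  | [] => top
  | A :: l => and' A (bigAnd l)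

/-- A formula is valid if it holds at every model and every reference interval. -/
def Valid (A : ITL V) : Prop := ∀ (σ : ℤ → Set V) (i j : ℤ), i ≤ j → Sat σ i j A

end ITL

namespace ITL

variable {V : Type}

/-- Satisfaction at a finite interval, presented as a (nonempty) finite sequence of states:
a list `l = σ^0 … σ^n` satisfies `A` iff `σ,0,n ⊨ A` for any extension `σ` of `l`
(ITL formulas are introspective, so the chosen extension is irrelevant). -/
def SatF (l : List (Set V)) (A : ITL V) : Prop :=
  Sat (fun k => l.getD k.toNat ∅) 0 ((l.length : ℤ) - 1) A

/-- `w` is a state formula: its truth depends only on the initial state. -/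
def IsStateFormula (w : ITL V) : Prop :=
  ∀ (σ σ' : ℤ → Set V) (i j i' j' : ℤ), σ i = σ' i' → (Sat σ i j w ↔ Sat σ' i' j' w)

/-- State `s` satisfies the state formula `w`. -/
def holdsAt (w : ITL V) (s : Set V) : Prop := Sat (fun _ => s) 0 0 w

/-- `σ|_w`: the subsequence of the states satisfying state formula `w`. -/
noncomputable def proj (w : ITL V) (l : List (Set V)) : List (Set V) :=
  l.filter fun s => @decide (holdsAt w s) (Classical.propDecidable _)

/-- `σ ⊨ w Π P` iff `σ|_w` is nonempty and satisfies `P`. -/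
def PiSem (w : ITL V) (P : List (Set V) → Prop) (l : List (Set V)) : Prop :=
  proj w l ≠ [] ∧ P (proj w l)

/-- `σ ⊨ w Π⁻¹ P` iff `σ = σ'|_w` for some nonempty `σ'` satisfying `P`. -/
def PiInvSem (w : ITL V) (P : List (Set V) → Prop) (l : List (Set V)) : Prop :=
  ∃ l' : List (Set V), l' ≠ [] ∧ proj w l' = l ∧ P l'

end ITL

open ITL

theorem proj_eq_self_of_box {V : Type} (w : ITL V) (hw : IsStateFormula w)
    (l : List (Set V)) (hl : l ≠ []) (h : SatF l (box w)) : proj w l = l := by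
  have hlen : 0 < (l.length : ℤ) := by
    exact_mod_cast List.length_pos_iff.mpr hl
  unfold SatF box neg dia top at h
  simp only [Sat] at h
  have hall : ∀ k : ℤ, 0 ≤ k → k ≤ (l.length : ℤ) - 1 →
      Sat (fun m : ℤ => l.getD m.toNat ∅) k ((l.length : ℤ) - 1) w := by
    intro k hk1 hk2
    by_contra hc
    exact h ⟨k, hk1, hk2, fun x => x, fun hs => hc hs⟩
  unfold proj
  rw [List.filter_eq_self]
  intro a ha
  obtain ⟨n, hn, rfl⟩ := List.getElem_of_mem ha
  have hk : Sat (fun m : ℤ => l.getD m.toNat ∅) (n : ℤ) ((l.length : ℤ) - 1) w := by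
    apply hall
    · positivity
    · omega
  have : holdsAt w l[n] := by
    rw [holdsAt, hw (fun _ => l[n]) (fun m : ℤ => l.getD m.toNat ∅) 0 0 (n : ℤ)
      ((l.length : ℤ) - 1) ?_]
    · exact hk
    · simp [List.getD, Int.toNat_natCast, hn]
  simp [this]


/-- `w Π⁻¹ (B ∧ □w) ≡ B ∧ □w` is valid on finite intervals. -/
theorem piInv_box_w {V : Type} (w B : ITL V) (hw : IsStateFormula w) :
    ∀ l : List (Set V), l ≠ [] →
      (PiInvSem w (fun m => SatF m (and' B (box w))) l ↔ SatF l (and' B (box w))) := by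
  intro l hl
  constructor
  · rintro ⟨l', hl', hproj, hsat⟩
    have hbox : SatF l' (box w) := by
      unfold SatF at hsat ⊢
      unfold and' neg at hsat
      simp only [Sat] at hsat
      tauto
    rw [proj_eq_self_of_box w hw l' hl' hbox] at hproj
    rwa [← hproj]
  · intro hsat
    have hbox : SatF l (box w) := by
      unfold SatF at hsat ⊢
      unfold and' neg at hsat
      simp only [Sat] at hsat
      tauto
    exact ⟨l, hl, proj_eq_self_of_box w hw l hl hbox, hsat⟩
end

section
/- Chopping off a leading ¬w-block under inverse projection: for any state formula w and ITL formulas A, B, on finite intervals, w Π⁻¹ ((B ∧ □¬w);Skip;(A ∧ w)) is equivalent to ⊥ if B ∧ □¬w is unsatisfiable, and equivalent to w Π⁻¹ (A ∧ w) otherwise. -/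
namespace ITL

variable {V : Type}

private lemma chain_mono (f : ℕ → ℤ) (N : ℕ) (h : ∀ n < N, f n < f (n + 1)) :
    ∀ m n : ℕ, m ≤ n → n ≤ N → f m ≤ f n := by
  intro m n hmn hnN
  induction n with
  | zero => cases Nat.le_zero.mp hmn; exact le_rfl
  | succ n ih =>
    rcases Nat.eq_or_lt_of_le hmn with rfl | hlt
    · exact le_rfl
    · exact le_trans (ih (Nat.lt_succ_iff.mp hlt) (by omega)) (le_of_lt (h n (by omega)))

lemma sat_shift (A : ITL V) : ∀ (σ σ' : ℤ → Set V) (c i j : ℤ), i ≤ j →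
    (∀ k, i ≤ k → k ≤ j → σ k = σ' (k + c)) →
    (Sat σ i j A ↔ Sat σ' (i + c) (j + c) A) := by
  induction A with
  | bot => intro σ σ' c i j hij h; exact Iff.rfl
  | var p =>
    intro σ σ' c i j hij h
    show p ∈ σ i ↔ p ∈ σ' (i + c)
    rw [h i le_rfl hij]
  | imp A B ihA ihB =>
    intro σ σ' c i j hij h
    exact imp_congr (ihA σ σ' c i j hij h) (ihB σ σ' c i j hij h)
  | next A ih =>
    intro σ σ' c i j hij h
    show (i < j ∧ Sat σ (i + 1) j A) ↔ (i + c < j + c ∧ Sat σ' (i + c + 1) (j + c) A)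
    constructor
    · rintro ⟨h1, h2⟩
      refine ⟨by omega, ?_⟩
      have e : i + c + 1 = i + 1 + c := by ring
      rw [e]
      exact (ih σ σ' c (i + 1) j (by omega) (fun k k1 k2 => h k (by omega) k2)).mp h2
    · rintro ⟨h1, h2⟩
      refine ⟨by omega, ?_⟩
      have e : i + c + 1 = i + 1 + c := by ring
      rw [e] at h2
      exact (ih σ σ' c (i + 1) j (by omega) (fun k k1 k2 => h k (by omega) k2)).mpr h2
  | chop A B ihA ihB =>
    intro σ σ' c i j hij h
    show (∃ k, i ≤ k ∧ k ≤ j ∧ Sat σ i k A ∧ Sat σ k j B) ↔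
      (∃ k, i + c ≤ k ∧ k ≤ j + c ∧ Sat σ' (i + c) k A ∧ Sat σ' k (j + c) B)
    constructor
    · rintro ⟨k, k1, k2, hA, hB⟩
      exact ⟨k + c, by omega, by omega,
        (ihA σ σ' c i k k1 (fun m m1 m2 => h m m1 (by omega))).mp hA,
        (ihB σ σ' c k j k2 (fun m m1 m2 => h m (by omega) m2)).mp hB⟩
    · rintro ⟨k, k1, k2, hA, hB⟩
      refine ⟨k - c, by omega, by omega, ?_, ?_⟩
      · have := (ihA σ σ' c i (k - c) (by omega) (fun m m1 m2 => h m m1 (by omega))).mpr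
        have e : k - c + c = k := by ring
        rw [e] at this
        exact this hA
      · have := (ihB σ σ' c (k - c) j (by omega) (fun m m1 m2 => h m (by omega) m2)).mpr
        have e : k - c + c = k := by ring
        rw [e] at this
        exact this hB
  | star A ih =>
    intro σ σ' c i j hij h
    show (i = j ∨ ∃ (N : ℕ) (f : ℕ → ℤ), f 0 = i ∧ f N = j ∧
        (∀ n < N, f n < f (n + 1)) ∧ ∀ n < N, Sat σ (f n) (f (n + 1)) A) ↔
      (i + c = j + c ∨ ∃ (N : ℕ) (f : ℕ → ℤ), f 0 = i + c ∧ f N = j + c ∧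
        (∀ n < N, f n < f (n + 1)) ∧ ∀ n < N, Sat σ' (f n) (f (n + 1)) A)
    constructor
    · rintro (rfl | ⟨N, f, hf0, hfN, hinc, hsat⟩)
      · exact Or.inl rfl
      · refine Or.inr ⟨N, fun n => f n + c, by show f 0 + c = i + c; omega,
          by show f N + c = j + c; omega,
          fun n hn => by have := hinc n hn; show f n + c < f (n + 1) + c; omega, ?_⟩
        intro n hn
        have hb : ∀ m, m ≤ N → i ≤ f m ∧ f m ≤ j := by
          intro m hm
          have h1 := chain_mono f N hinc 0 m (Nat.zero_le m) hm
          have h2 := chain_mono f N hinc m N hm le_rfl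
          omega
        have h1 := hb n (le_of_lt hn)
        have h2 := hb (n + 1) hn
        exact (ih σ σ' c (f n) (f (n + 1)) (le_of_lt (hinc n hn))
          (fun m m1 m2 => h m (by omega) (by omega))).mp (hsat n hn)
    · rintro (heq | ⟨N, g, hg0, hgN, hinc, hsat⟩)
      · exact Or.inl (by omega)
      · refine Or.inr ⟨N, fun n => g n - c, by show g 0 - c = i; omega,
          by show g N - c = j; omega,
          fun n hn => by have := hinc n hn; show g n - c < g (n + 1) - c; omega, ?_⟩
        intro n hn
        have hb : ∀ m, m ≤ N → i + c ≤ g m ∧ g m ≤ j + c := by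
          intro m hm
          have h1 := chain_mono g N hinc 0 m (Nat.zero_le m) hm
          have h2 := chain_mono g N hinc m N hm le_rfl
          omega
        have h1 := hb n (le_of_lt hn)
        have h2 := hb (n + 1) hn
        have := (ih σ σ' c (g n - c) (g (n + 1) - c) (by have := hinc n hn; omega)
          (fun m m1 m2 => h m (by omega) (by omega))).mpr
        have e1 : g n - c + c = g n := by ring
        have e2 : g (n + 1) - c + c = g (n + 1) := by ring
        rw [e1, e2] at this
        exact this (hsat n hn)

lemma sat_congr (A : ITL V) (σ σ' : ℤ → Set V) (i j : ℤ) (hij : i ≤ j)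
    (h : ∀ k, i ≤ k → k ≤ j → σ k = σ' k) : Sat σ i j A ↔ Sat σ' i j A := by
  have := sat_shift A σ σ' 0 i j hij (fun k k1 k2 => by rw [add_zero]; exact h k k1 k2)
  simpa using this

lemma sat_state {w : ITL V} (hw : IsStateFormula w) (σ : ℤ → Set V) (i j : ℤ) :
    Sat σ i j w ↔ holdsAt w (σ i) :=
  hw σ (fun _ => σ i) i j 0 0 rfl

lemma sat_chop (σ : ℤ → Set V) (i j : ℤ) (A B : ITL V) :
    Sat σ i j (chop A B) ↔ ∃ k, i ≤ k ∧ k ≤ j ∧ Sat σ i k A ∧ Sat σ k j B := Iff.rfl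

lemma sat_and' (σ : ℤ → Set V) (i j : ℤ) (A B : ITL V) :
    Sat σ i j (and' A B) ↔ Sat σ i j A ∧ Sat σ i j B := by
  show ((Sat σ i j A → (Sat σ i j B → False)) → False) ↔ _
  tauto

lemma sat_box_negw {w : ITL V} (hw : IsStateFormula w) (σ : ℤ → Set V) (i j : ℤ) :
    Sat σ i j (box (neg w)) ↔ ∀ k, i ≤ k → k ≤ j → ¬ holdsAt w (σ k) := by
  show ((∃ k, i ≤ k ∧ k ≤ j ∧ (False → False) ∧ ((Sat σ k j w → False) → False)) → False) ↔ _
  constructor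
  · intro h k k1 k2 hk
    exact h ⟨k, k1, k2, id, fun hn => hn ((sat_state hw σ k j).mpr hk)⟩
  · rintro h ⟨k, k1, k2, -, hk⟩
    exact h k k1 k2 ((sat_state hw σ k j).mp (Classical.byContradiction fun hn => hk hn))

lemma sat_chop_skip (σ : ℤ → Set V) (i j : ℤ) (C : ITL V) :
    Sat σ i j (chop skip C) ↔ i < j ∧ Sat σ (i + 1) j C := by
  show (∃ k, i ≤ k ∧ k ≤ j ∧ (i < k ∧ ((i + 1 < k ∧ (False → False)) → False)) ∧ Sat σ k j C) ↔ _
  constructor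
  · rintro ⟨k, k1, k2, ⟨klt, hns⟩, hC⟩
    have : k = i + 1 := by
      by_contra hne
      exact hns ⟨by omega, id⟩
    subst this
    exact ⟨by omega, hC⟩
  · rintro ⟨hij, hC⟩
    exact ⟨i + 1, by omega, by omega, ⟨by omega, fun hc => absurd hc.1 (by omega)⟩, hC⟩

/-- The infinite model associated to a finite list. -/
def mdl (l : List (Set V)) : ℤ → Set V := fun k => l.getD k.toNat ∅

lemma satF_iff (l : List (Set V)) (A : ITL V) :
    SatF l A ↔ Sat (mdl l) 0 ((l.length : ℤ) - 1) A := Iff.rfl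

lemma sat_take (l : List (Set V)) (A : ITL V) (k : ℤ) (h0 : 0 ≤ k)
    (h1 : k ≤ (l.length : ℤ) - 1) :
    Sat (mdl l) 0 k A ↔ SatF (l.take (k.toNat + 1)) A := by
  have hlen : (l.take (k.toNat + 1)).length = k.toNat + 1 := by
    rw [List.length_take]; omega
  have e : ((l.take (k.toNat + 1)).length : ℤ) - 1 = k := by rw [hlen]; omega
  rw [satF_iff, e]
  exact sat_congr A (mdl l) (mdl (l.take (k.toNat + 1))) 0 k h0 (fun m m1 m2 => by
    show l.getD m.toNat ∅ = (l.take (k.toNat + 1)).getD m.toNat ∅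
    rw [List.getD_eq_getElem?_getD, List.getD_eq_getElem?_getD, List.getElem?_take,
      if_pos (by omega)])

lemma sat_drop (l : List (Set V)) (A : ITL V) (m : ℤ) (h0 : 0 ≤ m)
    (h1 : m ≤ (l.length : ℤ) - 1) :
    Sat (mdl l) m ((l.length : ℤ) - 1) A ↔ SatF (l.drop m.toNat) A := by
  have hlen : ((l.drop m.toNat).length : ℤ) = (l.length : ℤ) - m := by
    rw [List.length_drop]; omega
  have this := sat_shift A (mdl (l.drop m.toNat)) (mdl l) m 0 ((l.length : ℤ) - m - 1)
    (by omega)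
    (fun k k1 k2 => by
      show (l.drop m.toNat).getD k.toNat ∅ = l.getD (k + m).toNat ∅
      rw [List.getD_eq_getElem?_getD, List.getD_eq_getElem?_getD, List.getElem?_drop,
        show m.toNat + k.toNat = (k + m).toNat by omega])
  rw [zero_add] at this
  have e : (l.length : ℤ) - m - 1 + m = (l.length : ℤ) - 1 := by ring
  rw [e] at this
  rw [satF_iff, hlen]
  exact this.symm

lemma proj_append (w : ITL V) (a b : List (Set V)) :
    proj w (a ++ b) = proj w a ++ proj w b := List.filter_append a b

lemma proj_eq_nil_iff (w : ITL V) (l : List (Set V)) :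
    proj w l = [] ↔ ∀ s ∈ l, ¬ holdsAt w s := by
  unfold proj
  rw [List.filter_eq_nil_iff]
  constructor <;> intro h s hs <;> have := h s hs <;>
    simpa [decide_eq_true_iff] using this

lemma forall_mem_iff (l : List (Set V)) (p : Set V → Prop) :
    (∀ s ∈ l, p s) ↔ ∀ k : ℤ, 0 ≤ k → k ≤ (l.length : ℤ) - 1 → p (mdl l k) := by
  constructor
  · intro h k k1 k2
    apply h
    have hk : k.toNat < l.length := by omega
    show l.getD k.toNat ∅ ∈ l
    rw [List.getD_eq_getElem?_getD, List.getElem?_eq_getElem hk]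
    exact List.getElem_mem hk
  · intro h s hs
    obtain ⟨n, hn, rfl⟩ := List.mem_iff_getElem.mp hs
    have := h (n : ℤ) (by positivity) (by omega)
    have e : ((n : ℤ)).toNat = n := by omega
    rw [show mdl l (n : ℤ) = l.getD ((n : ℤ)).toNat ∅ from rfl, e,
      List.getD_eq_getElem?_getD, List.getElem?_eq_getElem hn] at this
    simpa using this

end ITL

open ITL

/-- `w Π⁻¹ ((B ∧ □¬w);Skip;(A ∧ w))` is equivalent to `⊥` if `B ∧ □¬w`
is unsatisfiable on finite intervals, and to `w Π⁻¹ (A ∧ w)` otherwise. -/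
theorem piInv_chop_leading_block {V : Type} (w A B : ITL V) (hw : IsStateFormula w) :
    ((¬ ∃ l : List (Set V), l ≠ [] ∧ SatF l (and' B (box (neg w)))) →
      ∀ l : List (Set V), l ≠ [] →
        ¬ PiInvSem w
            (fun m => SatF m (chop (and' B (box (neg w))) (chop skip (and' A w)))) l) ∧
    ((∃ l : List (Set V), l ≠ [] ∧ SatF l (and' B (box (neg w)))) →
      ∀ l : List (Set V), l ≠ [] →
        (PiInvSem w
            (fun m => SatF m (chop (and' B (box (neg w))) (chop skip (and' A w)))) l ↔
          PiInvSem w (fun m => SatF m (and' A w)) l)) := by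
  classical
  constructor
  · rintro hno l hl ⟨l', hne, hproj, hsat⟩
    rw [satF_iff, sat_chop] at hsat
    obtain ⟨k, hk0, hk1, hX, -⟩ := hsat
    have hlpos : 0 < l'.length := List.length_pos_iff.mpr hne
    refine hno ⟨l'.take (k.toNat + 1), ?_, (sat_take l' _ k hk0 hk1).mp hX⟩
    apply List.ne_nil_of_length_pos
    rw [List.length_take]
    omega
  · rintro ⟨l0, hl0ne, hl0⟩ l hl
    have hl0pos : 0 < l0.length := List.length_pos_iff.mpr hl0ne
    have hl0box : ∀ s ∈ l0, ¬ holdsAt w s := by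
      rw [forall_mem_iff]
      intro k k1 k2
      have := ((satF_iff l0 _).mp hl0)
      rw [sat_and'] at this
      exact (sat_box_negw hw (mdl l0) 0 _).mp this.2 k k1 k2
    have hl0proj : proj w l0 = [] := (proj_eq_nil_iff w l0).mpr hl0box
    constructor
    · rintro ⟨l', hne, hproj, hsat⟩
      have hlpos : 0 < l'.length := List.length_pos_iff.mpr hne
      rw [satF_iff, sat_chop] at hsat
      obtain ⟨k, hk0, hk1, hX, hrest⟩ := hsat
      rw [sat_chop_skip] at hrest
      obtain ⟨hklt, hY⟩ := hrest
      have ekt : (k + 1).toNat = k.toNat + 1 := by omega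
      have hYF : SatF (l'.drop (k.toNat + 1)) (and' A w) := by
        rw [← ekt]
        exact (sat_drop l' _ (k + 1) (by omega) (by omega)).mp hY
      refine ⟨l'.drop (k.toNat + 1), ?_, ?_, hYF⟩
      · apply List.ne_nil_of_length_pos
        rw [List.length_drop]
        omega
      · have htake : proj w (l'.take (k.toNat + 1)) = [] := by
          rw [proj_eq_nil_iff, forall_mem_iff]
          intro m m1 m2
          have hboxF : SatF (l'.take (k.toNat + 1)) (box (neg w)) := by
            have := hX
            rw [sat_and'] at this
            exact (sat_take l' _ k hk0 hk1).mp this.2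
          rw [satF_iff] at hboxF
          exact (sat_box_negw hw _ 0 _).mp hboxF m m1 m2
        have h2 : proj w (l'.take (k.toNat + 1) ++ l'.drop (k.toNat + 1)) = l := by
          rw [List.take_append_drop]; exact hproj
        rw [proj_append, htake, List.nil_append] at h2
        exact h2
    · rintro ⟨l'', hne, hproj, hsat⟩
      have hl2pos : 0 < l''.length := List.length_pos_iff.mpr hne
      refine ⟨l0 ++ l'', by simp [hl0ne], ?_, ?_⟩
      · rw [proj_append, hl0proj, List.nil_append]
        exact hproj
      · show SatF (l0 ++ l'') (chop (and' B (box (neg w))) (chop skip (and' A w)))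
        rw [satF_iff, sat_chop]
        have hlen : ((l0 ++ l'').length : ℤ) = (l0.length : ℤ) + (l''.length : ℤ) := by
          rw [List.length_append]; push_cast; ring
        refine ⟨(l0.length : ℤ) - 1, by omega, by omega, ?_, ?_⟩
        · have et : (((l0.length : ℤ) - 1).toNat + 1) = l0.length := by omega
          rw [sat_take (l0 ++ l'') _ ((l0.length : ℤ) - 1) (by omega) (by omega), et,
            List.take_left]
          exact hl0
        · rw [sat_chop_skip]
          refine ⟨by omega, ?_⟩
          have et : ((l0.length : ℤ) - 1 + 1).toNat = l0.length := by omega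
          have := (sat_drop (l0 ++ l'') (and' A w) ((l0.length : ℤ) - 1 + 1)
            (by omega) (by omega)).mpr
          rw [et, List.drop_left] at this
          exact this hsat
end
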